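/- Define the game β-Wythoff Nim for irrational β > 2: positions are pairs of nonnegative integers; from a position where some coordinate equals ⌊nβ⌋ for a positive integer n, only Nim-type moves (subtracting a positive integer from exactly one coordinate) are allowed; from other positions, one may additionally subtract (s,t) with s,t ≥ 0, |s-t| < ⌊β⌋, not both zero, keeping coordinates nonnegative. Then, under normal play, the set of P-positions (previous-player winning positions) is exactly {(⌊nα⌋, ⌊nβ⌋), (⌊nβ⌋, ⌊nα⌋) : n nonnegative integer}, where α = β/(β-1). -/

import Mathlib

/-- A position of β-Wythoff Nim: a pair of nonnegative integers. -/
abbrev BWPos := ℕ × ℕ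

/-- `x` is a value of the β-Beatty sequence `⌊nβ⌋`, `n ≥ 1`. -/
def IsBeattyB (β : ℝ) (x : ℕ) : Prop := ∃ n : ℕ, 0 < n ∧ (x : ℤ) = ⌊(n : ℝ) * β⌋

/-- A Nim-type move: subtract a positive integer from exactly one coordinate. -/
def NimMove (p q : BWPos) : Prop :=
  (q.1 < p.1 ∧ q.2 = p.2) ∨ (q.1 = p.1 ∧ q.2 < p.2)

/-- An extended-diagonal move: subtract `(s, t)`, not both zero, with
`|s - t| < ⌊β⌋`. -/
def DiagMove (β : ℝ) (p q : BWPos) : Prop :=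
  ∃ s t : ℕ, q.1 + s = p.1 ∧ q.2 + t = p.2 ∧ ¬(s = 0 ∧ t = 0) ∧
    |(s : ℤ) - (t : ℤ)| < ⌊β⌋

/-- A legal move of β-Wythoff Nim: from positions having a coordinate of the
form `⌊nβ⌋` (`n ≥ 1`) only Nim-type moves are allowed; from other positions
one may additionally make extended-diagonal moves. -/
def BWMove (β : ℝ) (p q : BWPos) : Prop :=
  NimMove p q ∨
    (¬ IsBeattyB β p.1 ∧ ¬ IsBeattyB β p.2 ∧ DiagMove β p q)

theorem bwmove_decreasing {β : ℝ} {p q : BWPos} (h : BWMove β p q) :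
    q.1 + q.2 < p.1 + p.2 := by
  rcases h with h | ⟨-, -, s, t, h1, h2, h3, -⟩
  · rcases h with ⟨h1, h2⟩ | ⟨h1, h2⟩ <;> omega
  · omega

/-- `p` is a P-position (previous-player win under normal play): every legal
move from `p` leads to a non-P-position. -/
def BWPpos (β : ℝ) (p : BWPos) : Prop :=
  ∀ q : BWPos, BWMove β p q → ¬ BWPpos β q
termination_by p.1 + p.2
decreasing_by exact bwmove_decreasing (by assumption)

/-!
The sequences `a n = ⌊nα⌋` and `b n = ⌊nβ⌋` partition the positive integers (Rayleigh), and
`a (n+1) - a n ∈ {1, 2}`, `b (n+1) - b n ∈ {⌊β⌋, ⌊β⌋ + 1}`. Hence no Nim move joins two pairs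
`(a n, b n)`, `(b n, a n)`, and diagonal moves are forbidden from them since they contain a
`b`-value. Conversely, from any other position one either reduces a coordinate onto a partner
value, or, when both coordinates are `a`-values, `(a k, y)` with `a k ≤ y < b k`, the gaps
`b n - a n` grow by at most `⌊β⌋` per step, so some `m < k` has `0 ≤ (y - a k) - (b m - a m) < ⌊β⌋`
and the diagonal move to `(a m, b m)` is legal.
-/

section Beatty

variable {r s : ℝ}

theorem beattySeq_zero (r : ℝ) : beattySeq r 0 = 0 := by
  simp [beattySeq]

theorem beattySeq_add_floor_le (r : ℝ) (k : ℤ) : beattySeq r k + ⌊r⌋ ≤ beattySeq r (k + 1) := by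
  simpa [beattySeq, add_mul] using Int.le_floor_add (k * r) r

theorem beattySeq_add_one_le (r : ℝ) (k : ℤ) :
    beattySeq r (k + 1) ≤ beattySeq r k + ⌊r⌋ + 1 := by
  have := Int.le_floor_add_floor (k * r) r
  simp only [beattySeq, Int.cast_add, Int.cast_one, add_mul, one_mul]
  omega

theorem beattySeq_strictMono (hr : 1 ≤ r) : StrictMono (beattySeq r) := by
  have : 1 ≤ ⌊r⌋ := Int.le_floor.2 (by simpa using hr)
  exact strictMono_int_of_lt_succ fun k => by have := beattySeq_add_floor_le r k; omega

theorem beattySeq_natCast_nonneg (hr : 0 ≤ r) (n : ℕ) : 0 ≤ beattySeq r n :=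
  Int.floor_nonneg.2 (by simp only [Int.cast_natCast]; positivity)

theorem beattySeq_lt_beattySeq (h : ⌊r⌋ < ⌊s⌋) {k : ℤ} (hk : 0 < k) :
    beattySeq r k < beattySeq s k := by
  have hk' : (0 : ℝ) < k := by exact_mod_cast hk
  have hr : k * r < k * (⌊r⌋ + 1 : ℤ) := by
    gcongr
    exact_mod_cast Int.lt_floor_add_one r
  have hs : (k * (⌊r⌋ + 1 : ℤ) : ℝ) ≤ k * s := by
    gcongr
    exact (Int.cast_le.2 (Int.add_one_le_iff.2 h)).trans (Int.floor_le s)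
  calc beattySeq r k < k * (⌊r⌋ + 1) := Int.floor_lt.2 (by push_cast at hr ⊢; exact hr)
    _ ≤ beattySeq s k := Int.le_floor.2 (by push_cast at hs ⊢; exact hs)

theorem Irrational.exists_beattySeq_eq_or (hr : Irrational r) (hrs : r.HolderConjugate s) {z : ℤ}
    (hz : 0 < z) :
    (∃ k > 0, beattySeq r k = z) ∨ ∃ k > 0, beattySeq s k = z := by
  have hz' : z ∈ symmDiff {beattySeq r k | k > 0} {beattySeq s k | k > 0} := by
    rw [hr.beattySeq_symmDiff_beattySeq_pos hrs]
    exact hz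
  rcases Set.mem_symmDiff.1 hz' with ⟨h, -⟩ | ⟨h, -⟩
  exacts [Or.inl h, Or.inr h]

theorem Irrational.beattySeq_ne_beattySeq (hr : Irrational r) (hrs : r.HolderConjugate s) {j k : ℤ}
    (hj : 0 < j) (hk : 0 < k) :
    beattySeq r j ≠ beattySeq s k := by
  intro hjk
  have hpos : 0 < beattySeq r j := by
    simpa [beattySeq_zero] using beattySeq_strictMono hrs.lt.le hj
  have hmem : beattySeq r j ∈ symmDiff {beattySeq r k | k > 0} {beattySeq s k | k > 0} := by
    rw [hr.beattySeq_symmDiff_beattySeq_pos hrs]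
    exact hpos
  rcases Set.mem_symmDiff.1 hmem with ⟨-, h⟩ | ⟨-, h⟩
  · exact h ⟨k, hk, hjk.symm⟩
  · exact h ⟨j, hj, rfl⟩

end Beatty

theorem exists_le_and_lt_add_of_le_add {d : ℕ → ℤ} {c D : ℤ} (hstep : ∀ n, d (n + 1) ≤ d n + c)
    (h0 : d 0 ≤ D) {k : ℕ} (hk : D < d k) : ∃ m < k, d m ≤ D ∧ D < d m + c := by
  induction k with
  | zero => omega
  | succ k ih =>
    by_cases hDk : D < d k
    · obtain ⟨m, hmk, hm⟩ := ih hDk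
      exact ⟨m, by omega, hm⟩
    · exact ⟨k, by omega, by omega, by have := hstep k; omega⟩

theorem BWMove.swap {β : ℝ} {p q : BWPos} (h : BWMove β p q) : BWMove β p.swap q.swap := by
  rcases h with (⟨h1, h2⟩ | ⟨h1, h2⟩) | ⟨hx, hy, s, t, hs, ht, hst, hlt⟩
  · exact Or.inl (Or.inr ⟨h2, h1⟩)
  · exact Or.inl (Or.inl ⟨h2, h1⟩)
  · exact Or.inr ⟨hy, hx, t, s, ht, hs, by tauto, by rwa [abs_sub_comm]⟩

theorem isBeattyB_iff {β : ℝ} {x : ℕ} :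
    IsBeattyB β x ↔ ∃ n : ℕ, 0 < n ∧ (x : ℤ) = beattySeq β n := by
  simp [IsBeattyB, beattySeq]

namespace BetaWythoff

theorem bwPpos_iff_of_stable_of_absorbing {β : ℝ} {S : BWPos → Prop}
    (stable : ∀ p q, S p → BWMove β p q → ¬ S q)
    (absorbing : ∀ p, ¬ S p → ∃ q, BWMove β p q ∧ S q) (p : BWPos) : BWPpos β p ↔ S p := by
  induction hN : p.1 + p.2 using Nat.strong_induction_on generalizing p with
  | _ N ih =>
    have ih' : ∀ q, BWMove β p q → (BWPpos β q ↔ S q) := fun q hq =>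
      ih _ (hN ▸ bwmove_decreasing hq) q rfl
    rw [BWPpos]
    constructor
    · intro hP
      by_contra hS
      obtain ⟨q, hq, hSq⟩ := absorbing p hS
      exact hP q hq ((ih' q hq).2 hSq)
    · intro hS q hq hPq
      exact stable p q hS hq ((ih' q hq).1 hPq)

def BeattyPair (α β : ℝ) (p : BWPos) : Prop :=
  ∃ n : ℕ, ((p.1 : ℤ) = beattySeq α n ∧ (p.2 : ℤ) = beattySeq β n) ∨
    ((p.1 : ℤ) = beattySeq β n ∧ (p.2 : ℤ) = beattySeq α n)

theorem BeattyPair.swap {α β : ℝ} {p : BWPos} (h : BeattyPair α β p) : BeattyPair α β p.swap := by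
  obtain ⟨n, h | h⟩ := h
  exacts [⟨n, Or.inr h.symm⟩, ⟨n, Or.inl h.symm⟩]

variable {α β : ℝ}

theorem floor_eq_one_of_holderConjugate (hβ : 2 < β) (hconj : β.HolderConjugate α) : ⌊α⌋ = 1 := by
  have hα2 : α < 2 := hconj.conjugate_eq ▸ (div_lt_iff₀ (by linarith)).2 (by linarith)
  rw [Int.floor_eq_iff]
  exact ⟨by exact_mod_cast hconj.symm.lt.le, by push_cast; linarith⟩

theorem beattySeq_lt_beattySeq_of_pos (hβ : 2 < β) (hconj : β.HolderConjugate α) {n : ℕ}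
    (hn : 0 < n) : beattySeq α n < beattySeq β n := by
  have : 2 ≤ ⌊β⌋ := Int.le_floor.2 (by push_cast; linarith)
  exact beattySeq_lt_beattySeq (by rw [floor_eq_one_of_holderConjugate hβ hconj]; omega)
    (by exact_mod_cast hn)

theorem beattySeq_eq_beattySeq_iff_eq_zero (hirr : Irrational β) (hβ : 2 < β)
    (hconj : β.HolderConjugate α) {m n : ℕ} :
    beattySeq β m = beattySeq α n ↔ m = 0 ∧ n = 0 := by
  have hαinj := (beattySeq_strictMono hconj.symm.lt.le).injective
  have hβinj := (beattySeq_strictMono (show 1 ≤ β by linarith)).injective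
  constructor
  · intro h
    rcases Nat.eq_zero_or_pos m with rfl | hm
    · rw [Nat.cast_zero, beattySeq_zero, ← beattySeq_zero α] at h
      exact ⟨rfl, by exact_mod_cast hαinj h.symm⟩
    rcases Nat.eq_zero_or_pos n with rfl | hn
    · rw [Nat.cast_zero, beattySeq_zero, ← beattySeq_zero β] at h
      exact absurd (by exact_mod_cast hβinj h) hm.ne'
    exact absurd h (hirr.beattySeq_ne_beattySeq hconj (by exact_mod_cast hm) (by exact_mod_cast hn))
  · rintro ⟨rfl, rfl⟩
    simp [beattySeq_zero]

theorem exists_eq_beattySeq_or_isBeattyB (hirr : Irrational β) (hconj : β.HolderConjugate α)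
    (z : ℕ) : (∃ j : ℕ, (z : ℤ) = beattySeq α j) ∨ IsBeattyB β z := by
  rcases Nat.eq_zero_or_pos z with rfl | hz
  · exact Or.inl ⟨0, by simp [beattySeq_zero]⟩
  rw [isBeattyB_iff]
  rcases hirr.exists_beattySeq_eq_or hconj (z := z) (by exact_mod_cast hz) with
    ⟨k, hk, hkz⟩ | ⟨k, hk, hkz⟩
  · exact Or.inr ⟨k.toNat, by omega, by rw [Int.toNat_of_nonneg hk.le, hkz]⟩
  · exact Or.inl ⟨k.toNat, by rw [Int.toNat_of_nonneg hk.le, hkz]⟩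

theorem beattySeq_sub_beattySeq_succ_le (hβ : 2 < β) (hconj : β.HolderConjugate α) (n : ℕ) :
    beattySeq β (n + 1 : ℕ) - beattySeq α (n + 1 : ℕ) ≤
      beattySeq β n - beattySeq α n + ⌊β⌋ := by
  have hα := beattySeq_add_floor_le α n
  have hβ' := beattySeq_add_one_le β n
  rw [floor_eq_one_of_holderConjugate hβ hconj] at hα
  push_cast
  omega

theorem not_beattyPair_of_move_of_eq (hirr : Irrational β) (hβ : 2 < β)
    (hconj : β.HolderConjugate α) {p q : BWPos} {n : ℕ} (h1 : (p.1 : ℤ) = beattySeq α n)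
    (h2 : (p.2 : ℤ) = beattySeq β n) (hmove : BWMove β p q) : ¬ BeattyPair α β q := by
  have hαinj := (beattySeq_strictMono hconj.symm.lt.le).injective
  have hβinj := (beattySeq_strictMono (show 1 ≤ β by linarith)).injective
  rcases Nat.eq_zero_or_pos n with rfl | hn
  · rw [Nat.cast_zero, beattySeq_zero] at h1 h2
    rcases hmove with (⟨_, _⟩ | ⟨_, _⟩) | ⟨-, -, s, t, _, _, _, -⟩ <;> omega
  have hpair : ∀ m n : ℕ, beattySeq β m = beattySeq α n → m = 0 ∧ n = 0 := fun _ _ =>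
    (beattySeq_eq_beattySeq_iff_eq_zero hirr hβ hconj).1
  rcases hmove with (⟨hlt, heq⟩ | ⟨heq, hlt⟩) | ⟨-, hnot, -⟩
  · rintro ⟨m, ⟨c1, c2⟩ | ⟨c1, c2⟩⟩
    · have hmn : (m : ℤ) = n := hβinj (by omega)
      rw [hmn] at c1
      omega
    · exact hn.ne' (hpair n m (by omega)).1
  · rintro ⟨m, ⟨c1, c2⟩ | ⟨c1, c2⟩⟩
    · have hmn : (m : ℤ) = n := hαinj (by omega)
      rw [hmn] at c2
      omega
    · exact hn.ne' (hpair m n (by omega)).2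
  · exact (hnot (isBeattyB_iff.2 ⟨n, hn, h2⟩)).elim

theorem not_beattyPair_of_move (hirr : Irrational β) (hβ : 2 < β) (hconj : β.HolderConjugate α)
    {p q : BWPos} (hp : BeattyPair α β p) (hmove : BWMove β p q) : ¬ BeattyPair α β q := by
  obtain ⟨n, ⟨h1, h2⟩ | ⟨h1, h2⟩⟩ := hp
  · exact not_beattyPair_of_move_of_eq hirr hβ hconj h1 h2 hmove
  · exact fun hq =>
      not_beattyPair_of_move_of_eq hirr hβ hconj (p := p.swap) h2 h1 (hmove.swap) hq.swap

theorem exists_move_of_isBeattyB_fst (hirr : Irrational β) (hβ : 2 < β)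
    (hconj : β.HolderConjugate α) {p : BWPos} (hx : IsBeattyB β p.1) (hp : ¬ BeattyPair α β p) :
    ∃ q, BWMove β p q ∧ BeattyPair α β q := by
  obtain ⟨m, hm, hxm⟩ := isBeattyB_iff.1 hx
  have hαmono := beattySeq_strictMono hconj.symm.lt.le
  have hβmono := beattySeq_strictMono (show 1 ≤ β by linarith)
  have hαβm := beattySeq_lt_beattySeq_of_pos hβ hconj hm
  have hαm := beattySeq_natCast_nonneg hconj.symm.pos.le m
  rcases lt_trichotomy (p.2 : ℤ) (beattySeq α m) with hy | hy | hy
  · rcases exists_eq_beattySeq_or_isBeattyB hirr hconj p.2 with ⟨j, hyj⟩ | hyB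
    · have hjm : (j : ℤ) < m := hαmono.lt_iff_lt.1 (by omega)
      have hβjm := hβmono hjm
      have hβj := beattySeq_natCast_nonneg (show 0 ≤ β by linarith) j
      exact ⟨((beattySeq β j).toNat, p.2), Or.inl (Or.inl ⟨by omega, rfl⟩),
        j, Or.inr ⟨by omega, hyj⟩⟩
    · obtain ⟨j, hj, hyj⟩ := isBeattyB_iff.1 hyB
      have hαβj := beattySeq_lt_beattySeq_of_pos hβ hconj hj
      have hαj := beattySeq_natCast_nonneg hconj.symm.pos.le j
      exact ⟨((beattySeq α j).toNat, p.2), Or.inl (Or.inl ⟨by omega, rfl⟩),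
        j, Or.inl ⟨by omega, hyj⟩⟩
  · exact absurd ⟨m, Or.inr ⟨hxm, hy⟩⟩ hp
  · exact ⟨(p.1, (beattySeq α m).toNat), Or.inl (Or.inr ⟨rfl, by omega⟩),
      m, Or.inr ⟨hxm, by omega⟩⟩

theorem exists_move_of_fst_eq_beattySeq (hβ : 2 < β) (hconj : β.HolderConjugate α)
    {p : BWPos} {k : ℕ} (hx : (p.1 : ℤ) = beattySeq α k) (hxy : p.1 ≤ p.2) (hxB : ¬ IsBeattyB β p.1)
    (hyB : ¬ IsBeattyB β p.2) (hp : ¬ BeattyPair α β p) :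
    ∃ q, BWMove β p q ∧ BeattyPair α β q := by
  rcases lt_trichotomy (p.2 : ℤ) (beattySeq β k) with hy | hy | hy
  · obtain ⟨m, hmk, hle, hlt⟩ := exists_le_and_lt_add_of_le_add
      (d := fun n => beattySeq β n - beattySeq α n) (D := p.2 - p.1)
      (beattySeq_sub_beattySeq_succ_le hβ hconj)
      (by simp only [Nat.cast_zero, beattySeq_zero]; omega) (k := k) (by omega)
    have hαmk := beattySeq_strictMono hconj.symm.lt.le (Nat.cast_lt.2 hmk)
    have hαm := beattySeq_natCast_nonneg hconj.symm.pos.le m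
    have hβm := beattySeq_natCast_nonneg (show 0 ≤ β by linarith) m
    -- `s = a k - a m > 0` and `t - s = (p.2 - p.1) - (b m - a m) ∈ [0, ⌊β⌋)`
    refine ⟨((beattySeq α m).toNat, (beattySeq β m).toNat), Or.inr ⟨hxB, hyB, ?_⟩,
      m, Or.inl ⟨by omega, by omega⟩⟩
    refine ⟨p.1 - (beattySeq α m).toNat, p.2 - (beattySeq β m).toNat, by omega, by omega,
      by omega, ?_⟩
    rw [abs_lt]
    constructor <;> omega
  · exact absurd ⟨k, Or.inl ⟨hx, hy⟩⟩ hp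
  · have hβk := beattySeq_natCast_nonneg (show 0 ≤ β by linarith) k
    exact ⟨(p.1, (beattySeq β k).toNat), Or.inl (Or.inr ⟨rfl, by omega⟩),
      k, Or.inl ⟨hx, by omega⟩⟩

theorem exists_move_to_beattyPair (hirr : Irrational β) (hβ : 2 < β)
    (hconj : β.HolderConjugate α) {p : BWPos} (hp : ¬ BeattyPair α β p) :
    ∃ q, BWMove β p q ∧ BeattyPair α β q := by
  have hp' : ¬ BeattyPair α β p.swap := fun h => hp (by simpa only [Prod.swap_swap] using h.swap)
  have swap_back : (∃ q, BWMove β p.swap q ∧ BeattyPair α β q) →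
      ∃ q, BWMove β p q ∧ BeattyPair α β q := fun ⟨q, hq, hPq⟩ =>
    ⟨q.swap, by simpa only [Prod.swap_swap] using hq.swap, hPq.swap⟩
  by_cases hx : IsBeattyB β p.1
  · exact exists_move_of_isBeattyB_fst hirr hβ hconj hx hp
  by_cases hy : IsBeattyB β p.2
  · exact swap_back (exists_move_of_isBeattyB_fst hirr hβ hconj hy hp')
  obtain ⟨k, hk⟩ := (exists_eq_beattySeq_or_isBeattyB hirr hconj p.1).resolve_right hx
  obtain ⟨j, hj⟩ := (exists_eq_beattySeq_or_isBeattyB hirr hconj p.2).resolve_right hy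
  rcases le_total p.1 p.2 with hle | hle
  · exact exists_move_of_fst_eq_beattySeq hβ hconj hk hle hx hy hp
  · exact swap_back (exists_move_of_fst_eq_beattySeq hβ hconj (p := p.swap) hj hle hy hx hp')

end BetaWythoff

open BetaWythoff in
/-- Main Theorem: the P-positions of β-Wythoff Nim are exactly
`(⌊nα⌋, ⌊nβ⌋)` and `(⌊nβ⌋, ⌊nα⌋)`, `n ≥ 0`, where `α = β/(β-1)`. -/
theorem stmt_10 (β : ℝ) (hirr : Irrational β) (hβ : 2 < β)
    (α : ℝ) (hα : α = β / (β - 1)) :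
    ∀ p : BWPos, BWPpos β p ↔
      ∃ n : ℕ, ((p.1 : ℤ), (p.2 : ℤ)) = (⌊(n : ℝ) * α⌋, ⌊(n : ℝ) * β⌋) ∨
               ((p.1 : ℤ), (p.2 : ℤ)) = (⌊(n : ℝ) * β⌋, ⌊(n : ℝ) * α⌋) := by
  have hconj : β.HolderConjugate α := (Real.holderConjugate_iff_eq_conjExponent (by linarith)).2 hα
  intro p
  rw [bwPpos_iff_of_stable_of_absorbing (S := BeattyPair α β)
    (fun _ _ hp hmove => not_beattyPair_of_move hirr hβ hconj hp hmove)
    (fun _ hp => exists_move_to_beattyPair hirr hβ hconj hp)]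
  simp only [BeattyPair, beattySeq, Int.cast_natCast, Prod.mk.injEq]
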